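/- Let E be a finite-dimensional real inner product space and let T : E → E be a symmetric linear map having no eigenvalue in the closed interval [-1/2, 1/2]. Suppose f : ℝ → E is twice differentiable at every point of (0,∞) and satisfies -κ² f''(κ) - κ f'(κ) + (T∘T)(f(κ)) + T(f(κ)) + (1/4) f(κ) + κ² f(κ) = 0 for all κ > 0, and suppose the function κ ↦ ‖f(κ)‖²/κ is integrable on (0,∞). Then f(κ) = 0 for all κ > 0. -/

import Mathlib

/-!
In the variable `t = log κ` the function `g t = f (exp t)` solves
`g'' = (T + 1/2)² g + e^{2t} g`, so `⟪g, g''⟫ ≥ 0` and hence `‖g‖²` is convex, since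
`(‖g‖²)'' = 2 (‖g'‖² + ⟪g, g''⟫)`. The measure `dκ/κ` on `(0, ∞)` becomes `dt` on `ℝ`, so `‖g‖²`
is moreover integrable on `ℝ`. A convex integrable function `u` on `ℝ` is nonpositive: by
convexity `2 u a ≤ u (a - s) + u (a + s)`, and the right side is integrable in `s`.
-/

open MeasureTheory Set Real

theorem ConvexOn.nonpos_of_integrable {u : ℝ → ℝ} (hu : ConvexOn ℝ univ u)
    (hint : Integrable u) (a : ℝ) : u a ≤ 0 := by
  by_contra! ha
  have hmid : ∀ s, 2 * u a ≤ u (a - s) + u (a + s) := fun s => by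
    have := hu.2 (mem_univ (a - s)) (mem_univ (a + s)) (by norm_num : (0 : ℝ) ≤ 1 / 2)
      (by norm_num : (0 : ℝ) ≤ 1 / 2) (by norm_num)
    simp only [smul_eq_mul] at this
    rw [show 1 / 2 * (a - s) + 1 / 2 * (a + s) = a by ring] at this
    linarith
  have hconst : Integrable (fun _ : ℝ => 2 * u a) :=
    ((hint.comp_sub_left a).add (hint.comp_add_left a)).mono' aestronglyMeasurable_const
      (ae_of_all _ fun s => (Real.norm_of_nonneg (by positivity)).trans_le (hmid s))
  have := (integrable_const_iff_isFiniteMeasure (by positivity)).1 hconst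
  simpa using measure_lt_top (volume : Measure ℝ) univ

theorem integrableOn_Ioi_div_iff_integrable_comp_exp {h : ℝ → ℝ} :
    IntegrableOn (fun x => h x / x) (Ioi 0) ↔ Integrable (fun t => h (exp t)) := by
  rw [← range_exp, ← image_univ, integrableOn_image_iff_integrableOn_abs_deriv_smul
    MeasurableSet.univ (fun t _ => (hasDerivAt_exp t).hasDerivWithinAt) exp_injective.injOn,
    integrableOn_univ]
  refine integrable_congr (ae_of_all _ fun t => ?_)
  simp [abs_of_pos (exp_pos t), mul_div_cancel₀ _ (exp_pos t).ne']

theorem hasDerivAt_comp_exp {F : Type*} [NormedAddCommGroup F] [NormedSpace ℝ F] {f : ℝ → F}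
    {t : ℝ} (hf : DifferentiableAt ℝ f (exp t)) :
    HasDerivAt (fun s => f (exp s)) (exp t • deriv f (exp t)) t :=
  hf.hasDerivAt.scomp t (hasDerivAt_exp t)

section InnerProductSpace

variable {E : Type*} [NormedAddCommGroup E] [InnerProductSpace ℝ E]

theorem convexOn_univ_norm_sq_of_inner_deriv2_nonneg {g g' g'' : ℝ → E}
    (hg : ∀ t, HasDerivAt g (g' t) t) (hg' : ∀ t, HasDerivAt g' (g'' t) t)
    (h : ∀ t, 0 ≤ inner ℝ (g t) (g'' t)) : ConvexOn ℝ univ (fun t => ‖g t‖ ^ 2) := by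
  have hd : deriv (fun t => ‖g t‖ ^ 2) = fun t => 2 * inner ℝ (g t) (g' t) :=
    funext fun t => (hg t).norm_sq.deriv
  have hd2 : ∀ t, HasDerivAt (fun t => 2 * inner ℝ (g t) (g' t))
      (2 * (inner ℝ (g t) (g'' t) + inner ℝ (g' t) (g' t))) t :=
    fun t => ((hg t).inner ℝ (hg' t)).const_mul 2
  refine convexOn_univ_of_deriv2_nonneg (fun t => (hg t).norm_sq.differentiableAt) ?_ fun t => ?_
  · rw [hd]; exact fun t => (hd2 t).differentiableAt
  · rw [Function.iterate_succ_apply, Function.iterate_one, hd, (hd2 t).deriv]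
    linarith [h t, real_inner_self_nonneg (x := g' t)]

theorem LinearMap.IsSymmetric.inner_apply_apply_add_apply_add_quarter_smul {T : E →ₗ[ℝ] E}
    (hT : T.IsSymmetric) (x : E) :
    inner ℝ x (T (T x) + T x + (1 / 4 : ℝ) • x) = ‖T x + (1 / 2 : ℝ) • x‖ ^ 2 := by
  rw [← real_inner_self_eq_norm_sq, inner_add_right, inner_add_right, real_inner_smul_right, ← hT, inner_add_left,
    inner_add_right, inner_add_right, real_inner_smul_left, real_inner_smul_right,
    real_inner_smul_left, real_inner_smul_right, real_inner_comm x (T x)]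
  ring

end InnerProductSpace

theorem cone_kernel_trivial_general {E : Type*} [NormedAddCommGroup E]
    [InnerProductSpace ℝ E]
    (T : E →ₗ[ℝ] E) (hT : T.IsSymmetric)
    (f : ℝ → E)
    (hf : ∀ κ ∈ Set.Ioi (0 : ℝ),
      DifferentiableAt ℝ f κ ∧ DifferentiableAt ℝ (deriv f) κ)
    (hode : ∀ κ ∈ Set.Ioi (0 : ℝ),
      -(κ ^ 2) • deriv (deriv f) κ - κ • deriv f κ + T (T (f κ)) + T (f κ)
        + (1/4 : ℝ) • f κ + κ ^ 2 • f κ = 0)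
    (hint : IntegrableOn (fun κ => ‖f κ‖ ^ 2 / κ) (Set.Ioi 0)) :
    ∀ κ ∈ Set.Ioi (0 : ℝ), f κ = 0 := by
  set g := fun t => f (exp t)
  have hg (t : ℝ) : HasDerivAt g (exp t • deriv f (exp t)) t :=
    hasDerivAt_comp_exp (hf _ (exp_pos t)).1
  have hg' (t : ℝ) : HasDerivAt (fun s => exp s • deriv f (exp s))
      (T (T (g t)) + T (g t) + (1 / 4 : ℝ) • g t + exp t ^ 2 • g t) t := by
    refine ((hasDerivAt_exp t).smul (hasDerivAt_comp_exp (hf _ (exp_pos t)).2)).congr_deriv ?_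
    linear_combination (norm := module) -hode _ (exp_pos t)
  have hconv : ConvexOn ℝ univ (fun t => ‖g t‖ ^ 2) :=
    convexOn_univ_norm_sq_of_inner_deriv2_nonneg hg hg' fun t => by
      rw [inner_add_right, hT.inner_apply_apply_add_apply_add_quarter_smul,
        real_inner_smul_right, real_inner_self_eq_norm_sq]
      positivity
  intro κ hκ
  have := hconv.nonpos_of_integrable (integrableOn_Ioi_div_iff_integrable_comp_exp.1 hint) (log κ)
  simpa [g, exp_log hκ] using this

/-- if a symmetric endomorphism `T` of a finite-dimensional real
inner product space has no eigenvalue in `[-1/2, 1/2]` and `f : ℝ → E` solves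
`-κ² f'' - κ f' + T²f + Tf + (1/4) f + κ² f = 0` on `(0,∞)` with
`κ ↦ ‖f(κ)‖²/κ` integrable on `(0,∞)`, then `f` vanishes on `(0,∞)`. -/
theorem cone_kernel_trivial {E : Type*} [NormedAddCommGroup E]
    [InnerProductSpace ℝ E] [FiniteDimensional ℝ E]
    (T : E →ₗ[ℝ] E) (hT : T.IsSymmetric)
    (heig : ∀ μ ∈ Set.Icc (-(1/2) : ℝ) (1/2 : ℝ), ¬ Module.End.HasEigenvalue T μ)
    (f : ℝ → E)
    (hf : ∀ κ ∈ Set.Ioi (0 : ℝ),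
      DifferentiableAt ℝ f κ ∧ DifferentiableAt ℝ (deriv f) κ)
    (hode : ∀ κ ∈ Set.Ioi (0 : ℝ),
      -(κ ^ 2) • deriv (deriv f) κ - κ • deriv f κ + T (T (f κ)) + T (f κ)
        + (1/4 : ℝ) • f κ + κ ^ 2 • f κ = 0)
    (hint : IntegrableOn (fun κ => ‖f κ‖ ^ 2 / κ) (Set.Ioi 0)) :
    ∀ κ ∈ Set.Ioi (0 : ℝ), f κ = 0 :=
  cone_kernel_trivial_general T hT f hf hode hint
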